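/- arXiv:1806.09554 — 2 statements merged into one kernel-verified Lean document; each statement's English description precedes it below -/
import Mathlib

section
/- For any type x, the double dual is equivalent to x: Det(x̄̄) = Det(x), where x̄ := x → I. Concretely, λ_{(x→I)→I} = λ_x and Δ_{(x→I)→I} = Δ_x. -/
open Matrix Kronecker
open scoped ComplexOrder

/-- Types of higher-order quantum theory. The trivial type `I` is `elem 1`. -/
inductive QT where
  | elem (n : ℕ)
  | arrow (x y : QT)

/-- The index type of the Hilbert space `H_x` associated to a type `x`. -/
def Idx : QT → Type
  | .elem n => Fin n
  | .arrow x y => Idx x × Idx y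

instance idxFintype : (x : QT) → Fintype (Idx x)
  | .elem n => inferInstanceAs (Fintype (Fin n))
  | .arrow x y =>
      letI := idxFintype x; letI := idxFintype y
      inferInstanceAs (Fintype (Idx x × Idx y))

instance idxDecEq : (x : QT) → DecidableEq (Idx x)
  | .elem n => inferInstanceAs (DecidableEq (Fin n))
  | .arrow x y =>
      letI := idxDecEq x; letI := idxDecEq y
      inferInstanceAs (DecidableEq (Idx x × Idx y))

/-- Partial trace over the first tensor factor. -/
noncomputable def ptrA {ι κ : Type} [Fintype ι]
    (M : Matrix (ι × κ) (ι × κ) ℂ) : Matrix κ κ ℂ :=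
  fun k l => ∑ i : ι, M (i, k) (i, l)

/-- Deterministic events of type `x`, defined recursively: for elementary types,
positive unit-trace operators; for `x → y`, positive operators `R` such that
`Tr_x[(Sᵀ ⊗ 1) R] ∈ Det y` for every `S ∈ Det x`. -/
noncomputable def Det : (x : QT) → Set (Matrix (Idx x) (Idx x) ℂ)
  | .elem n => {R | R.PosSemidef ∧ R.trace = 1}
  | .arrow x y =>
      setOf (fun (R : Matrix (Idx x × Idx y) (Idx x × Idx y) ℂ) =>
        R.PosSemidef ∧
        ∀ S ∈ Det x, ptrA ((Sᵀ ⊗ₖ (1 : Matrix (Idx y) (Idx y) ℂ)) * R) ∈ Det y)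

/-- The real subspace of Hermitian operators. -/
noncomputable def hermSub (ι : Type) [Fintype ι] [DecidableEq ι] :
    Submodule ℝ (Matrix ι ι ℂ) where
  carrier := {X | X.IsHermitian}
  add_mem' := fun ha hb => ha.add hb
  zero_mem' := Matrix.isHermitian_zero
  smul_mem' := fun c X hX => by
    show ((c • X)ᴴ = c • X)
    rw [Matrix.conjTranspose_smul, star_trivial, hX.eq]

/-- The real subspace of traceless Hermitian operators. -/
noncomputable def tlHermSub (ι : Type) [Fintype ι] [DecidableEq ι] :
    Submodule ℝ (Matrix ι ι ℂ) where
  carrier := {X | X.IsHermitian ∧ X.trace = 0}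
  add_mem' := fun ha hb => ⟨ha.1.add hb.1, by rw [trace_add, ha.2, hb.2, add_zero]⟩
  zero_mem' := ⟨Matrix.isHermitian_zero, Matrix.trace_zero ι ℂ⟩
  smul_mem' := fun c X hX =>
    ⟨by show ((c • X)ᴴ = c • X)
        rw [Matrix.conjTranspose_smul, star_trivial, hX.1.eq],
     by rw [trace_smul, hX.2, smul_zero]⟩

/-- The Hilbert–Schmidt orthogonal complement of `S` inside `B`. -/
noncomputable def perpWithin {ι : Type} [Fintype ι] [DecidableEq ι]
    (S B : Submodule ℝ (Matrix ι ι ℂ)) : Submodule ℝ (Matrix ι ι ℂ) where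
  carrier := {Z | Z ∈ B ∧ ∀ Y ∈ S, (Y * Z).trace = 0}
  add_mem' := fun ha hb =>
    ⟨B.add_mem ha.1 hb.1, fun Y hY => by
      rw [mul_add, trace_add, ha.2 Y hY, hb.2 Y hY, add_zero]⟩
  zero_mem' := ⟨B.zero_mem, fun Y _ => by simp⟩
  smul_mem' := fun c Z hZ =>
    ⟨B.smul_mem c hZ.1, fun Y hY => by
      rw [Matrix.mul_smul, trace_smul, hZ.2 Y hY, smul_zero]⟩

/-- Tensor product of operator subspaces, spanned by Kronecker products. -/
noncomputable def tensorSub {ι κ : Type} [Fintype ι] [DecidableEq ι]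
    [Fintype κ] [DecidableEq κ]
    (P : Submodule ℝ (Matrix ι ι ℂ)) (Q : Submodule ℝ (Matrix κ κ ℂ)) :
    Submodule ℝ (Matrix (ι × κ) (ι × κ) ℂ) :=
  Submodule.span ℝ {A | ∃ X ∈ P, ∃ Y ∈ Q, A = X ⊗ₖ Y}

/-- The one-dimensional subspace `L_e` spanned by the identity. -/
noncomputable def idSub (ι : Type) [Fintype ι] [DecidableEq ι] :
    Submodule ℝ (Matrix ι ι ℂ) :=
  Submodule.span ℝ {(1 : Matrix ι ι ℂ)}

/-- The subspace `Δ_x` of traceless Hermitian operators characterizing the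
deterministic events of type `x`:
`Δ_A = Traceless(H_A)` for elementary `A`, and
`Δ_{x→y} = [Herm(H_x) ⊗ Δ_y] ⊕ [Δ̄_x ⊗ Δ_y^⊥]`, where `Δ̄_x` is the complement of
`Δ_x` inside the traceless Hermitian operators and `Δ_y^⊥` its orthogonal
complement inside the Hermitian operators. -/
noncomputable def Delta : (x : QT) → Submodule ℝ (Matrix (Idx x) (Idx x) ℂ)
  | .elem n => tlHermSub (Fin n)
  | .arrow x y =>
      (tensorSub (hermSub (Idx x)) (Delta y) ⊔
        tensorSub (perpWithin (Delta x) (tlHermSub (Idx x)))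
          (perpWithin (Delta y) (hermSub (Idx y))) :
        Submodule ℝ (Matrix (Idx x × Idx y) (Idx x × Idx y) ℂ))

/-- The normalization constant `λ_x`: `λ_A = 1/d_A`, `λ_{x→y} = λ_y/(d_x λ_x)`. -/
noncomputable def lam : QT → ℝ
  | .elem n => 1 / n
  | .arrow x y => lam y / (Fintype.card (Idx x) * lam x)

/-!
Since `Δ_I = 0` and `Δ_I^⊥ = ℝ·1`, the recursion collapses to `Δ_{x→I} ≅ Δ̄_x`, so the double
dual has `Δ̄̄_x` up to reindexing. On any real space of Hermitian matrices `(Y, Z) ↦ Re tr(Y Z)`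
is a nondegenerate symmetric form (`Re tr(Y Y) = ‖Y‖²`), so in finite dimension the complement
is an involution and `Δ̄̄_x = Δ_x`. For `λ`, `λ_{x→I} = 1/(d_x λ_x)` gives back `λ_x` after two
steps; when `d_x = 0` both sides are `0` (with `1/0 = 0`), because then `λ_x = 0`.
-/

lemma Matrix.IsHermitian.trace_mul_eq_ofReal_re {ι : Type*} [Fintype ι] {Y Z : Matrix ι ι ℂ}
    (hY : Y.IsHermitian) (hZ : Z.IsHermitian) : (Y * Z).trace = ((Y * Z).trace.re : ℂ) := by
  refine (Complex.conj_eq_iff_re.mp ?_).symm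
  change star (Y * Z).trace = _
  rw [← trace_conjTranspose, conjTranspose_mul, hY.eq, hZ.eq, trace_mul_comm]

lemma Matrix.IsHermitian.kronecker {ι κ : Type*} {X : Matrix ι ι ℂ} {Y : Matrix κ κ ℂ}
    (hX : X.IsHermitian) (hY : Y.IsHermitian) : (X ⊗ₖ Y).IsHermitian := by
  rw [IsHermitian, conjTranspose_kronecker, hX.eq, hY.eq]

lemma Matrix.IsHermitian.eq_re_smul_one_of_fin_one {Y : Matrix (Fin 1) (Fin 1) ℂ}
    (hY : Y.IsHermitian) : Y = (Y 0 0).re • (1 : Matrix (Fin 1) (Fin 1) ℂ) := by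
  ext i j
  rw [Subsingleton.elim i 0, Subsingleton.elim j 0]
  simp [Complex.conj_eq_iff_re.mp (hY.apply 0 0)]

section TraceForm

variable {ι : Type} [Fintype ι] [DecidableEq ι]

lemma mem_hermSub {X : Matrix ι ι ℂ} : X ∈ hermSub ι ↔ X.IsHermitian := Iff.rfl

lemma tlHermSub_le_hermSub : tlHermSub ι ≤ hermSub ι := fun _ hX => hX.1

lemma perpWithin_le (S B : Submodule ℝ (Matrix ι ι ℂ)) : perpWithin S B ≤ B :=
  fun _ hZ => hZ.1

noncomputable def reTraceForm (B : Submodule ℝ (Matrix ι ι ℂ)) : LinearMap.BilinForm ℝ B :=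
  LinearMap.mk₂ ℝ (fun Y Z => ((Y * Z : Matrix ι ι ℂ).trace).re)
    (fun Y Y' Z => by simp [add_mul, trace_add])
    (fun c Y Z => by simp [trace_smul])
    (fun Y Z Z' => by simp [mul_add, trace_add])
    (fun c Y Z => by simp [trace_smul])

lemma reTraceForm_apply (B : Submodule ℝ (Matrix ι ι ℂ)) (Y Z : B) :
    reTraceForm B Y Z = ((Y * Z : Matrix ι ι ℂ).trace).re := rfl

lemma reTraceForm_isRefl (B : Submodule ℝ (Matrix ι ι ℂ)) : (reTraceForm B).IsRefl := by
  intro Y Z h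
  rwa [reTraceForm_apply, trace_mul_comm]

lemma reTraceForm_nondegenerate {B : Submodule ℝ (Matrix ι ι ℂ)} (hB : B ≤ hermSub ι) :
    (reTraceForm B).Nondegenerate := by
  refine (reTraceForm_isRefl B).nondegenerate_iff_separatingLeft.2 fun Y hY => ?_
  have hYherm : (Y : Matrix ι ι ℂ).IsHermitian := hB Y.2
  have htrace : ((Y : Matrix ι ι ℂ)ᴴ * Y).trace = 0 := by
    rw [hYherm.eq, hYherm.trace_mul_eq_ofReal_re hYherm, ← reTraceForm_apply, hY Y,
      Complex.ofReal_zero]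
  exact Subtype.ext (trace_conjTranspose_mul_self_eq_zero_iff.mp htrace)

lemma perpWithin_eq_map_orthogonal {B S : Submodule ℝ (Matrix ι ι ℂ)} (hB : B ≤ hermSub ι)
    (hSB : S ≤ B) :
    perpWithin S B = ((reTraceForm B).orthogonal (S.comap B.subtype)).map B.subtype := by
  ext Z
  constructor
  · rintro ⟨hZB, hZ⟩
    exact ⟨⟨Z, hZB⟩, fun Y hY => (congrArg Complex.re (hZ Y hY)).trans Complex.zero_re, rfl⟩
  · rintro ⟨⟨Z, hZB⟩, hZ, rfl⟩
    refine ⟨hZB, fun Y hY => ?_⟩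
    change (Y * Z).trace = 0
    have hre : ((Y * Z).trace).re = 0 := hZ ⟨Y, hSB hY⟩ hY
    rw [(mem_hermSub.1 (hB (hSB hY))).trace_mul_eq_ofReal_re (hB hZB), hre, Complex.ofReal_zero]

theorem perpWithin_perpWithin {B S : Submodule ℝ (Matrix ι ι ℂ)} (hB : B ≤ hermSub ι)
    (hSB : S ≤ B) : perpWithin (perpWithin S B) B = S := by
  rw [perpWithin_eq_map_orthogonal hB (perpWithin_le S B), perpWithin_eq_map_orthogonal hB hSB,
    Submodule.comap_map_eq_of_injective B.injective_subtype,
    (reTraceForm B).orthogonal_orthogonal (reTraceForm_nondegenerate hB) (reTraceForm_isRefl B),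
    Submodule.map_comap_subtype, inf_eq_right.mpr hSB]

end TraceForm

section Reindex

variable {ι κ : Type}

noncomputable abbrev reindexₗ (e : ι ≃ κ) : Matrix ι ι ℂ →ₗ[ℝ] Matrix κ κ ℂ :=
  (reindexLinearEquiv ℝ ℂ e e).toLinearMap

lemma reindexₗ_apply (e : ι ≃ κ) (M : Matrix ι ι ℂ) :
    reindexₗ e M = M.submatrix e.symm e.symm := rfl

variable [Fintype ι] [Fintype κ]

lemma trace_reindexₗ (e : ι ≃ κ) (M : Matrix ι ι ℂ) : (reindexₗ e M).trace = M.trace :=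
  e.symm.sum_comp fun i => M i i

lemma reindexₗ_mul (e : ι ≃ κ) (M N : Matrix ι ι ℂ) :
    reindexₗ e M * reindexₗ e N = reindexₗ e (M * N) :=
  reindexLinearEquiv_mul ℝ ℂ e e e M N

variable [DecidableEq ι] [DecidableEq κ]

lemma map_reindexₗ_tlHermSub (e : ι ≃ κ) : (tlHermSub ι).map (reindexₗ e) = tlHermSub κ := by
  ext Z
  rw [Submodule.mem_map_equiv, symm_reindexLinearEquiv]
  change (reindexₗ e.symm Z).IsHermitian ∧ (reindexₗ e.symm Z).trace = 0 ↔
    Z.IsHermitian ∧ Z.trace = 0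
  rw [trace_reindexₗ, reindexₗ_apply, isHermitian_submatrix_equiv]

lemma map_reindexₗ_perpWithin (e : ι ≃ κ) (S B : Submodule ℝ (Matrix ι ι ℂ)) :
    (perpWithin S B).map (reindexₗ e) = perpWithin (S.map (reindexₗ e)) (B.map (reindexₗ e)) := by
  ext Z
  constructor
  · rintro ⟨Y, ⟨hYB, hY⟩, rfl⟩
    refine ⟨Submodule.mem_map_of_mem hYB, ?_⟩
    rintro _ ⟨W, hW, rfl⟩
    rw [reindexₗ_mul, trace_reindexₗ, hY W hW]
  · rintro ⟨⟨Y, hYB, rfl⟩, hY⟩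
    refine ⟨Y, ⟨hYB, fun W hW => ?_⟩, rfl⟩
    rw [← trace_reindexₗ e, ← reindexₗ_mul]
    exact hY _ (Submodule.mem_map_of_mem hW)

end Reindex

section Kronecker

variable {ι κ : Type} [Fintype ι] [DecidableEq ι] [Fintype κ] [DecidableEq κ]

lemma tensorSub_le {P : Submodule ℝ (Matrix ι ι ℂ)} {Q : Submodule ℝ (Matrix κ κ ℂ)}
    {W : Submodule ℝ (Matrix (ι × κ) (ι × κ) ℂ)} (h : ∀ X ∈ P, ∀ Y ∈ Q, X ⊗ₖ Y ∈ W) :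
    tensorSub P Q ≤ W :=
  Submodule.span_le.2 fun _ ⟨X, hX, Y, hY, hA⟩ => hA ▸ h X hX Y hY

lemma tensorSub_bot (P : Submodule ℝ (Matrix ι ι ℂ)) :
    tensorSub P (⊥ : Submodule ℝ (Matrix κ κ ℂ)) = ⊥ :=
  eq_bot_iff.2 <| tensorSub_le fun X _ Y hY => by
    rw [(Submodule.mem_bot ℝ).1 hY, kronecker_zero]
    exact Submodule.zero_mem _

lemma kronecker_mem_tlHermSub_of_right {X : Matrix ι ι ℂ} {Y : Matrix κ κ ℂ}
    (hX : X ∈ hermSub ι) (hY : Y ∈ tlHermSub κ) : X ⊗ₖ Y ∈ tlHermSub (ι × κ) :=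
  ⟨mem_hermSub.1 hX |>.kronecker hY.1, by rw [trace_kronecker, hY.2, mul_zero]⟩

lemma kronecker_mem_tlHermSub_of_left {X : Matrix ι ι ℂ} {Y : Matrix κ κ ℂ}
    (hX : X ∈ tlHermSub ι) (hY : Y ∈ hermSub κ) : X ⊗ₖ Y ∈ tlHermSub (ι × κ) :=
  ⟨hX.1.kronecker (mem_hermSub.1 hY), by rw [trace_kronecker, hX.2, zero_mul]⟩

end Kronecker

lemma kronecker_one_fin_one {ι : Type} (X : Matrix ι ι ℂ) :
    X ⊗ₖ (1 : Matrix (Fin 1) (Fin 1) ℂ) = reindexₗ (Equiv.prodUnique ι (Fin 1)).symm X := by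
  ext ⟨i, a⟩ ⟨j, b⟩
  rw [Subsingleton.elim a 0, Subsingleton.elim b 0]
  simp [reindexₗ_apply]

section TrivialSystem

variable {ι : Type} [Fintype ι] [DecidableEq ι]

lemma tlHermSub_fin_one : tlHermSub (Fin 1) = ⊥ := by
  refine eq_bot_iff.2 fun X hX => (Submodule.mem_bot ℝ).2 ?_
  ext i j
  rw [Subsingleton.elim i 0, Subsingleton.elim j 0]
  simpa [trace_fin_one] using hX.2

lemma perpWithin_bot (B : Submodule ℝ (Matrix ι ι ℂ)) : perpWithin ⊥ B = B :=
  le_antisymm (perpWithin_le ⊥ B) fun Z hZ => ⟨hZ, fun Y hY => by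
    rw [(Submodule.mem_bot ℝ).1 hY, zero_mul, trace_zero]⟩

lemma tensorSub_hermSub_fin_one (P : Submodule ℝ (Matrix ι ι ℂ)) :
    tensorSub P (hermSub (Fin 1)) = P.map (reindexₗ (Equiv.prodUnique ι (Fin 1)).symm) := by
  refine le_antisymm (tensorSub_le fun X hX Y hY => ?_) ?_
  · rw [(mem_hermSub.1 hY).eq_re_smul_one_of_fin_one, kronecker_smul, kronecker_one_fin_one]
    exact Submodule.smul_mem _ _ (Submodule.mem_map_of_mem hX)
  · rintro _ ⟨X, hX, rfl⟩
    rw [← kronecker_one_fin_one]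
    exact Submodule.subset_span ⟨X, hX, 1, isHermitian_one, rfl⟩

end TrivialSystem

lemma Delta_le_tlHermSub : ∀ x : QT, Delta x ≤ tlHermSub (Idx x)
  | .elem _ => le_rfl
  | .arrow _ y => sup_le
      (tensorSub_le fun _ hX _ hY =>
        kronecker_mem_tlHermSub_of_right hX (Delta_le_tlHermSub y hY))
      (tensorSub_le fun _ hX _ hY => kronecker_mem_tlHermSub_of_left hX.1 hY.1)

lemma Delta_arrow_elem_one (x : QT) :
    Delta (.arrow x (.elem 1)) =
      (perpWithin (Delta x) (tlHermSub (Idx x))).map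
        (reindexₗ (Equiv.prodUnique (Idx x) (Fin 1)).symm) := by
  change tensorSub (hermSub (Idx x)) (tlHermSub (Fin 1)) ⊔
      tensorSub (perpWithin (Delta x) (tlHermSub (Idx x)))
        (perpWithin (tlHermSub (Fin 1)) (hermSub (Fin 1))) = _
  rw [tlHermSub_fin_one, tensorSub_bot, bot_sup_eq, perpWithin_bot, tensorSub_hermSub_fin_one]

lemma lam_eq_zero_of_card_eq_zero : ∀ x : QT, Fintype.card (Idx x) = 0 → lam x = 0
  | .elem n, h => by
    obtain rfl : n = 0 := (Fintype.card_fin n).symm.trans h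
    simp [lam]
  | .arrow x y, h => by
    rcases Nat.mul_eq_zero.mp ((Fintype.card_prod (Idx x) (Idx y)).symm.trans h) with hx | hy
    · simp [lam, lam_eq_zero_of_card_eq_zero x hx]
    · simp [lam, lam_eq_zero_of_card_eq_zero y hy]

/-- The double dual `x̄̄ := (x → I) → I` is equivalent to `x`:
`λ_{(x→I)→I} = λ_x` and `Δ_{(x→I)→I} = Δ_x` (transported along the canonical
identification `(H_x ⊗ ℂ) ⊗ ℂ ≃ H_x`), hence `Det(x̄̄) = Det(x)`. -/
theorem double_dual_equiv (x : QT) :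
    lam (QT.arrow (QT.arrow x (QT.elem 1)) (QT.elem 1)) = lam x ∧
    Delta (QT.arrow (QT.arrow x (QT.elem 1)) (QT.elem 1)) =
      Submodule.map
        (Matrix.reindexLinearEquiv ℝ ℂ
          (((Equiv.prodUnique (Idx x × Fin 1) (Fin 1)).trans
              (Equiv.prodUnique (Idx x) (Fin 1))).symm)
          (((Equiv.prodUnique (Idx x × Fin 1) (Fin 1)).trans
              (Equiv.prodUnique (Idx x) (Fin 1))).symm)).toLinearMap
        (Delta x) := by
  constructor
  · have hcard : Fintype.card (Idx (.arrow x (.elem 1))) = Fintype.card (Idx x) :=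
      Fintype.card_congr (Equiv.prodUnique (Idx x) (Fin 1))
    rcases eq_or_ne (Fintype.card (Idx x)) 0 with h0 | h0
    · simp [lam, hcard, h0, lam_eq_zero_of_card_eq_zero x h0]
    · simp only [lam, hcard]
      field_simp
  · have hdual := Delta_arrow_elem_one x
    -- stated over `Idx x × Fin 1`, not the defeq `Idx (x → I)`, so that the reindexing lemmas match
    have hbidual : Delta (.arrow (.arrow x (.elem 1)) (.elem 1)) =
        (perpWithin (ι := Idx x × Fin 1) (Delta (.arrow x (.elem 1))) (tlHermSub _)).map
          (reindexₗ (Equiv.prodUnique (Idx x × Fin 1) (Fin 1)).symm) :=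
      Delta_arrow_elem_one _
    rw [hbidual, hdual, ← map_reindexₗ_tlHermSub (Equiv.prodUnique (Idx x) (Fin 1)).symm,
      ← map_reindexₗ_perpWithin, perpWithin_perpWithin tlHermSub_le_hermSub (Delta_le_tlHermSub x),
      ← Submodule.map_comp]
    rfl
end

section
/- For the comb hierarchy with base * → *, the index set of the concatenated comb of length p = n + m satisfies D_p = e_n D_m ∪ D_n e_m ∪ D_n D_m ∪ D̄_n D_m, where e_k denotes the all-ones string of the appropriate length for a k-comb and juxtaposition is concatenation of string sets. -/
/-- The all-ones string of length `k`. -/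
def allOnes (k : ℕ) : List Bool := List.replicate k true

/-- The index set `D_n` (in the elementary-chain representation of the comb
hierarchy with base `* → *`, where the `n`-comb corresponds to a chain of `2n`
elementary systems). -/
def Dchain : ℕ → Set (List Bool)
  | 0 => ∅
  | 1 => {[false]}
  | n + 2 =>
      {l | ∃ w : List Bool, w.length = n + 1 ∧ l = w ++ [false]} ∪
      {l | ∃ w : List Bool, w.length = n + 1 ∧ w ≠ allOnes (n + 1) ∧
        w ∉ Dchain (n + 1) ∧ l = w ++ [true]}

/-- Number of trailing `true`s. -/
def trail (l : List Bool) : ℕ := (l.reverse.takeWhile id).length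

lemma trail_append_false (w : List Bool) : trail (w ++ [false]) = 0 := by
  simp [trail]

lemma trail_append_true (w : List Bool) : trail (w ++ [true]) = trail w + 1 := by
  simp [trail, List.takeWhile]

lemma trail_nil : trail [] = 0 := rfl

lemma trail_eq_length_iff (l : List Bool) : trail l = l.length ↔ l = allOnes l.length := by
  constructor
  · intro h
    have hpre := List.takeWhile_prefix (l := l.reverse) id
    have hlen : (l.reverse.takeWhile id).length = l.reverse.length := by
      simpa [trail] using h
    have heq : l.reverse.takeWhile id = l.reverse := hpre.eq_of_length hlen
    have hall : ∀ b ∈ l, b = true := by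
      intro b hb
      have hb' : b ∈ l.reverse.takeWhile id := by rw [heq]; simpa using hb
      exact List.mem_takeWhile_imp hb'
    exact List.eq_replicate_iff.mpr ⟨rfl, hall⟩
  · intro h
    rw [h]
    simp [trail, allOnes, List.takeWhile_replicate]

lemma trail_append (u v : List Bool) :
    trail (u ++ v) = if trail v = v.length then trail u + v.length else trail v := by
  unfold trail
  rw [List.reverse_append, List.takeWhile_append]
  simp only [List.length_reverse]
  split <;> simp <;> omega

lemma trail_append_allOnes (u : List Bool) (k : ℕ) :
    trail (u ++ allOnes k) = trail u + k := by
  rw [trail_append]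
  have h : trail (allOnes k) = (allOnes k).length := (trail_eq_length_iff _).mpr (by simp [allOnes])
  rw [if_pos h]
  simp [allOnes]

lemma trail_append_ne (u v : List Bool) (hv : v ≠ allOnes v.length) :
    trail (u ++ v) = trail v := by
  rw [trail_append, if_neg]
  intro h
  exact hv ((trail_eq_length_iff v).mp h)

lemma dchain_iff : ∀ k : ℕ, 1 ≤ k → ∀ l : List Bool,
    (l ∈ Dchain k ↔ l.length = k ∧ l ≠ allOnes k ∧ Even (trail l))
  | 0, h => by omega
  | 1, _ => by
    intro l
    constructor
    · rintro rfl
      refine ⟨rfl, ?_, ?_⟩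
      · simp [allOnes]
      · simp [trail]
    · rintro ⟨h1, h2, h3⟩
      match l, h1 with
      | [b], _ =>
        cases b
        · rfl
        · simp [allOnes] at h2
  | (n+2), _ => by
    intro l
    have IH := dchain_iff (n+1) (by omega)
    constructor
    · rintro (⟨w, hw, rfl⟩ | ⟨w, hw, hwo, hwD, rfl⟩)
      · refine ⟨by simp [hw], ?_, ?_⟩
        · intro h
          have : (false : Bool) ∈ w ++ [false] := by simp
          rw [h] at this
          exact absurd (List.eq_of_mem_replicate this) (by simp)
        · simp [trail_append_false]
      · refine ⟨by simp [hw], ?_, ?_⟩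
        · intro h
          apply hwo
          have h2 : allOnes (n + 2) = allOnes (n+1) ++ [true] := by
            simp [allOnes, List.replicate_add]
          rw [h2] at h
          exact List.append_cancel_right h
        · rw [trail_append_true]
          have : ¬ Even (trail w) := by
            intro he
            exact hwD ((IH w).mpr ⟨hw, hwo, he⟩)
          simpa [Nat.even_add_one] using this
    · rintro ⟨h1, h2, h3⟩
      have hne : l ≠ [] := by intro h; rw [h] at h1; simp at h1
      obtain ⟨w, b, rfl⟩ : ∃ w b, l = w ++ [b] :=
        ⟨l.dropLast, l.getLast hne, (List.dropLast_append_getLast hne).symm⟩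
      have hwlen : w.length = n + 1 := by simpa using h1
      cases b
      · exact Or.inl ⟨w, hwlen, rfl⟩
      · refine Or.inr ⟨w, hwlen, ?_, ?_, rfl⟩
        · intro h
          apply h2
          simp [allOnes, List.replicate_add, h]
        · intro hw
          obtain ⟨_, _, he⟩ := (IH w).mp hw
          rw [trail_append_true] at h3
          rcases he with ⟨a, ha⟩
          rcases h3 with ⟨c, hc⟩
          omega

lemma even_trail_add (a m : ℕ) : Even (a + 2 * m) ↔ Even a := by
  constructor
  · rintro ⟨c, hc⟩; exact ⟨c - m, by omega⟩
  · rintro ⟨c, hc⟩; exact ⟨c + m, by omega⟩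

/-- Concatenation identity for combs: for `p = n + m`,
`D_p = e_n D_m ∪ D_n e_m ∪ D_n D_m ∪ D̄_n D_m`, where `e_k` is the all-ones
string, `D_k` the index set of the `k`-comb (chain representation of length `2k`)
and `D̄_k = T_k \ D_k`. -/
theorem comb_concatenation (n m : ℕ) (hn : 1 ≤ n) (hm : 1 ≤ m) :
    Dchain (2 * (n + m)) =
      {l | ∃ v ∈ Dchain (2 * m), l = allOnes (2 * n) ++ v} ∪
      {l | ∃ u ∈ Dchain (2 * n), l = u ++ allOnes (2 * m)} ∪
      {l | ∃ u ∈ Dchain (2 * n), ∃ v ∈ Dchain (2 * m), l = u ++ v} ∪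
      {l | ∃ u : List Bool, u.length = 2 * n ∧ u ≠ allOnes (2 * n) ∧
        u ∉ Dchain (2 * n) ∧ ∃ v ∈ Dchain (2 * m), l = u ++ v} := by
  have hp : 1 ≤ 2 * (n + m) := by omega
  have hDn := dchain_iff (2 * n) (by omega)
  have hDm := dchain_iff (2 * m) (by omega)
  have hsplit : allOnes (2 * (n + m)) = allOnes (2 * n) ++ allOnes (2 * m) := by
    simp [allOnes, ← List.replicate_add]; ring_nf
  ext l
  rw [dchain_iff _ hp l]
  constructor
  · rintro ⟨h1, h2, h3⟩
    set u := l.take (2 * n) with hu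
    set v := l.drop (2 * n) with hv
    have hul : u.length = 2 * n := by simp [hu, h1] <;> omega
    have hvl : v.length = 2 * m := by simp [hv, h1] <;> omega
    have huv : l = u ++ v := (List.take_append_drop _ l).symm
    by_cases hvo : v = allOnes (2 * m)
    · -- case v all ones : u ∈ D_n
      refine Or.inl (Or.inl (Or.inr ⟨u, ?_, by rw [huv, hvo]⟩))
      have ht : trail l = trail u + 2 * m := by rw [huv, hvo, trail_append_allOnes]
      refine (hDn u).mpr ⟨hul, ?_, ?_⟩
      · intro h
        exact h2 (by rw [huv, hvo, h, hsplit])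
      · rw [ht] at h3
        exact (even_trail_add _ m).mp h3
    · -- v ∈ D_m
      have hvm : v ∈ Dchain (2 * m) := by
        refine (hDm v).mpr ⟨hvl, hvo, ?_⟩
        have : trail l = trail v := by
          rw [huv]; exact trail_append_ne u v (by rwa [hvl])
        rwa [this] at h3
      by_cases hu1 : u = allOnes (2 * n)
      · exact Or.inl (Or.inl (Or.inl ⟨v, hvm, by rw [huv, hu1]⟩))
      · by_cases hu2 : u ∈ Dchain (2 * n)
        · exact Or.inl (Or.inr ⟨u, hu2, v, hvm, huv⟩)
        · exact Or.inr ⟨u, hul, hu1, hu2, v, hvm, huv⟩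
  · have main : ∀ u v : List Bool, u.length = 2 * n → v ∈ Dchain (2 * m) →
        ((u ++ v).length = 2 * (n + m) ∧ u ++ v ≠ allOnes (2 * (n + m)) ∧
          Even (trail (u ++ v))) := by
      intro u v hul hv
      obtain ⟨hvl, hvo, hve⟩ := (hDm v).mp hv
      have htr : trail (u ++ v) = trail v := trail_append_ne u v (by rwa [hvl])
      refine ⟨by simp [hul, hvl] <;> omega, ?_, by rwa [htr]⟩
      intro h
      rw [hsplit] at h
      have : v = allOnes (2 * m) := by
        apply List.append_inj_right h
        simp [hul, allOnes]
      exact hvo this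
    rintro (((⟨v, hv, rfl⟩ | ⟨u, hu, rfl⟩) | ⟨u, hu, v, hv, rfl⟩) | ⟨u, hul, hu1, hu2, v, hv, rfl⟩)
    · exact main _ v (by simp [allOnes]) hv
    · obtain ⟨hul, huo, hue⟩ := (hDn u).mp hu
      refine ⟨by simp [hul, allOnes] <;> omega, ?_, ?_⟩
      · intro h
        rw [hsplit] at h
        exact huo (List.append_inj_left h (by simp [hul, allOnes]))
      · rw [trail_append_allOnes]
        exact (even_trail_add _ m).mpr hue
    · exact main u v ((hDn u).mp hu).1 hv
    · exact main u v hul hv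
end
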